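/- arXiv:1607.07967 — 2 statements merged into one kernel-verified Lean document; each statement's English description precedes it below -/
import Mathlib

section
/- Let D_P, D_Q, D_R be finite sets of variables with D_R ∩ D_Q ⊆ D_P, and let Ω_P, Ω_Q, Ω_R be sets of mappings such that every mapping in Ω_P has domain D_P, every mapping in Ω_Q has domain D_Q, and every mapping in Ω_R has domain D_R. Then (Ω_P ⟕ Ω_R) ⋈ Ω_Q = (Ω_P ⋈ Ω_Q) ⟕ Ω_R. -/
/- Fix infinite disjoint sets `V` of variables and `U` of constants.
A mapping is a partial function from variables to constants, represented as
`V → Option U`; its domain is the set of variables on which it is defined. -/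

variable {V U : Type*}

/-- A (partial) mapping from variables to constants. -/
abbrev Mapping (V U : Type*) := V → Option U

/-- The domain of a mapping. -/
def mdom (μ : Mapping V U) : Set V := {x | (μ x).isSome}

/-- Two mappings are compatible if they agree on the intersection of their domains. -/
def Compatible (μ₁ μ₂ : Mapping V U) : Prop :=
  ∀ x ∈ mdom μ₁ ∩ mdom μ₂, μ₁ x = μ₂ x

/-- The union of two mappings (left-biased; for compatible mappings this is
the usual union). -/
def munion (μ₁ μ₂ : Mapping V U) : Mapping V U :=
  fun x => (μ₁ x).orElse (fun _ => μ₂ x)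

/-- Join of two sets of mappings:
`Ω₁ ⋈ Ω₂ = {μ₁ ∪ μ₂ | μ₁ ∈ Ω₁, μ₂ ∈ Ω₂, μ₁ ∼ μ₂}`. -/
def Join (Ω₁ Ω₂ : Set (Mapping V U)) : Set (Mapping V U) :=
  {μ | ∃ μ₁ ∈ Ω₁, ∃ μ₂ ∈ Ω₂, Compatible μ₁ μ₂ ∧ μ = munion μ₁ μ₂}

/-- Difference of two sets of mappings:
`Ω₁ ∖ Ω₂ = {μ₁ ∈ Ω₁ | no μ₂ ∈ Ω₂ is compatible with μ₁}`. -/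
def MDiff (Ω₁ Ω₂ : Set (Mapping V U)) : Set (Mapping V U) :=
  {μ₁ ∈ Ω₁ | ¬ ∃ μ₂ ∈ Ω₂, Compatible μ₁ μ₂}

/-- Left outer join: `Ω₁ ⟕ Ω₂ = (Ω₁ ⋈ Ω₂) ∪ (Ω₁ ∖ Ω₂)`. -/
def LeftJoin (Ω₁ Ω₂ : Set (Mapping V U)) : Set (Mapping V U) :=
  Join Ω₁ Ω₂ ∪ MDiff Ω₁ Ω₂

lemma mem_mdom {μ : Mapping V U} {x : V} : x ∈ mdom μ ↔ (μ x).isSome := Iff.rfl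

lemma munion_apply_some {μ₁ μ₂ : Mapping V U} {x : V} (h : (μ₁ x).isSome) :
    munion μ₁ μ₂ x = μ₁ x := by
  cases hx : μ₁ x with
  | none => simp [hx] at h
  | some v => simp [munion, hx]

lemma munion_apply_none {μ₁ μ₂ : Mapping V U} {x : V} (h : μ₁ x = none) :
    munion μ₁ μ₂ x = μ₂ x := by
  simp [munion, h]

lemma mdom_munion (μ₁ μ₂ : Mapping V U) : mdom (munion μ₁ μ₂) = mdom μ₁ ∪ mdom μ₂ := by
  ext x
  simp only [mem_mdom, Set.mem_union]
  cases hx : μ₁ x with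
  | none => rw [munion_apply_none hx]; simp [hx]
  | some v => rw [munion_apply_some (by simp [hx])]; simp [hx]

/-- key rearrangement: if whenever both `r` and `q` are defined, `p` is defined,
then `(p ∪ r) ∪ q = (p ∪ q) ∪ r`. -/
lemma munion_swap {p q r : Mapping V U}
    (h : ∀ x, (r x).isSome → (q x).isSome → (p x).isSome) :
    munion (munion p r) q = munion (munion p q) r := by
  funext x
  cases hp : p x with
  | some v => simp [munion, hp]
  | none =>
    cases hr : r x with
    | none => simp [munion, hp, hr]
    | some vr =>
      cases hq : q x with
      | none => simp [munion, hp, hr, hq]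
      | some vq =>
        exact absurd (h x (by simp [hr]) (by simp [hq])) (by simp [hp])

lemma compatible_munion_left {p r q : Mapping V U} (h : Compatible (munion p r) q)
    (x : V) (hx : x ∈ mdom p ∩ mdom q) : p x = q x := by
  have := h x ⟨by rw [mdom_munion]; exact Or.inl hx.1, hx.2⟩
  rwa [munion_apply_some hx.1] at this

/-- if `D_R ∩ D_Q ⊆ D_P` and the mappings in `Ω_P`, `Ω_Q`, `Ω_R`
have domains `D_P`, `D_Q`, `D_R` respectively, then
`(Ω_P ⟕ Ω_R) ⋈ Ω_Q = (Ω_P ⋈ Ω_Q) ⟕ Ω_R`. -/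
theorem leftJoin_join_exchange [Infinite V] [Infinite U]
    (DP DQ DR : Finset V) (hD : (DR : Set V) ∩ (DQ : Set V) ⊆ (DP : Set V))
    (ΩP ΩQ ΩR : Set (Mapping V U))
    (hP : ∀ μ ∈ ΩP, mdom μ = (DP : Set V))
    (hQ : ∀ μ ∈ ΩQ, mdom μ = (DQ : Set V))
    (hR : ∀ μ ∈ ΩR, mdom μ = (DR : Set V)) :
    Join (LeftJoin ΩP ΩR) ΩQ = LeftJoin (Join ΩP ΩQ) ΩR := by
  -- derived domain condition, pointwise
  ext μ
  constructor
  · rintro ⟨ν, hν, q, hq, hcomp, rfl⟩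
    rcases hν with ⟨p, hp, r, hr, hpr, rfl⟩ | ⟨hpP, hnr⟩
    · -- ν = p ∪ r
      have hdom : ∀ x, (r x).isSome → (q x).isSome → (p x).isSome := by
        intro x h1 h2
        have : x ∈ (DP : Set V) := hD ⟨(hR r hr) ▸ h1, (hQ q hq) ▸ h2⟩
        rwa [← hP p hp] at this
      have hpq : Compatible p q := fun x hx => compatible_munion_left hcomp x hx
      have hrpq : Compatible r (munion p q) := by
        intro x hx
        rw [mdom_munion] at hx
        have hxp : x ∈ mdom p := by
          rcases hx.2 with h | h
          · exact h
          · exact hdom x hx.1 h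
        have h1 : r x = p x :=
          (hpr x ⟨hxp, hx.1⟩).symm
        rw [h1, munion_apply_some hxp]
      have hrpq' : Compatible (munion p q) r := by
        intro x hx
        exact (hrpq x ⟨hx.2, hx.1⟩).symm
      left
      exact ⟨munion p q, ⟨p, hp, q, hq, hpq, rfl⟩, r, hr, hrpq', munion_swap hdom⟩
    · -- ν = p ∈ MDiff
      right
      refine ⟨⟨ν, hpP, q, hq, hcomp, rfl⟩, ?_⟩
      rintro ⟨r, hrR, hcr⟩
      apply hnr
      refine ⟨r, hrR, fun x hx => ?_⟩
      have := hcr x ⟨by rw [mdom_munion]; exact Or.inl hx.1, hx.2⟩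
      rwa [munion_apply_some hx.1] at this
  · rintro (⟨ν, ⟨p, hp, q, hq, hpq, rfl⟩, r, hr, hcomp, rfl⟩ | ⟨⟨p, hp, q, hq, hpq, rfl⟩, hnr⟩)
    · have hdom : ∀ x, (r x).isSome → (q x).isSome → (p x).isSome := by
        intro x h1 h2
        have : x ∈ (DP : Set V) := hD ⟨(hR r hr) ▸ h1, (hQ q hq) ▸ h2⟩
        rwa [← hP p hp] at this
      have hpr : Compatible p r := by
        intro x hx
        have := hcomp x ⟨by rw [mdom_munion]; exact Or.inl hx.1, hx.2⟩
        rwa [munion_apply_some hx.1] at this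
      have hprq : Compatible (munion p r) q := by
        intro x hx
        rw [mdom_munion] at hx
        have hxp : x ∈ mdom p := by
          rcases hx.1 with h | h
          · exact h
          · exact hdom x h hx.2
        rw [munion_apply_some hxp]
        exact hpq x ⟨hxp, hx.2⟩
      exact ⟨munion p r, Or.inl ⟨p, hp, r, hr, hpr, rfl⟩, q, hq, hprq, (munion_swap hdom).symm⟩
    · have hpdiff : p ∈ MDiff ΩP ΩR := by
        refine ⟨hp, ?_⟩
        rintro ⟨r, hrR, hcr⟩
        apply hnr
        refine ⟨r, hrR, fun x hx => ?_⟩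
        rw [mdom_munion] at hx
        have hxp : x ∈ mdom p := by
          rcases hx.1 with h | h
          · exact h
          · have : x ∈ (DP : Set V) := hD ⟨(hR r hrR) ▸ hx.2, (hQ q hq) ▸ h⟩
            rwa [← hP p hp] at this
        rw [munion_apply_some hxp]
        exact hcr x ⟨hxp, hx.2⟩
      exact ⟨p, Or.inr hpdiff, q, hq, hpq, rfl⟩
end

section
/- Let D be a finite set of variables, let Ω_P and Ω_R be sets of mappings such that every mapping in Ω_P has domain D, and let f be a predicate on mappings such that f(μ) = f(ν) whenever μ and ν agree on D (i.e., f depends only on the restriction of a mapping to D). Then {μ ∈ Ω_P ⟕ Ω_R | f(μ)} = {μ ∈ Ω_P | f(μ)} ⟕ Ω_R. -/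
/- Fix infinite disjoint sets `V` of variables and `U` of constants.
A mapping is a partial function from variables to constants, represented as
`V → Option U`; its domain is the set of variables on which it is defined. -/

variable {V U : Type*}

/-- if every mapping in `Ω_P` has domain `D` and the predicate `f`
depends only on the restriction of a mapping to `D`, then
`{μ ∈ Ω_P ⟕ Ω_R | f μ} = {μ ∈ Ω_P | f μ} ⟕ Ω_R`. -/
theorem filter_leftJoin_exchange [Infinite V] [Infinite U]
    (D : Finset V) (ΩP ΩR : Set (Mapping V U))
    (hP : ∀ μ ∈ ΩP, mdom μ = (D : Set V))
    (f : Mapping V U → Prop)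
    (hf : ∀ μ ν : Mapping V U, (∀ x ∈ D, μ x = ν x) → (f μ ↔ f ν)) :
    {μ ∈ LeftJoin ΩP ΩR | f μ} = LeftJoin {μ ∈ ΩP | f μ} ΩR := by
  have key : ∀ μ₁ ∈ ΩP, ∀ μ₂, f (munion μ₁ μ₂) ↔ f μ₁ := by
    intro μ₁ h₁ μ₂
    apply hf
    intro x hx
    have : (μ₁ x).isSome := by
      have := hP μ₁ h₁
      have : x ∈ mdom μ₁ := by rw [this]; exact_mod_cast hx
      exact this
    obtain ⟨a, ha⟩ := Option.isSome_iff_exists.mp this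
    simp [munion, ha]
  ext μ
  constructor
  · rintro ⟨h, hfμ⟩
    rcases h with ⟨μ₁, h₁, μ₂, h₂, hc, rfl⟩ | ⟨h₁, h₂⟩
    · exact Or.inl ⟨μ₁, ⟨h₁, (key μ₁ h₁ μ₂).mp hfμ⟩, μ₂, h₂, hc, rfl⟩
    · exact Or.inr ⟨⟨h₁, hfμ⟩, h₂⟩
  · rintro (⟨μ₁, ⟨h₁, hf₁⟩, μ₂, h₂, hc, rfl⟩ | ⟨⟨h₁, hf₁⟩, h₂⟩)
    · exact ⟨Or.inl ⟨μ₁, h₁, μ₂, h₂, hc, rfl⟩, (key μ₁ h₁ μ₂).mpr hf₁⟩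
    · exact ⟨Or.inr ⟨h₁, h₂⟩, hf₁⟩
end
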